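/- Let μ ≥ 0, R > 0, and let ε̄ ∈ [0,1] be such that ε̄ + μ/R ≤ 1. If a probability measure ℙ satisfies ℙ(A_R) ≤ ε̄, where A_R is the R-enlargement of a violation set A, and ℙ' is any probability measure with Wasserstein-type distance d_W(ℙ, ℙ') ≤ μ where d_W is defined via couplings with squared-norm cost, then ℙ'(A) ≤ ε̄ + μ/R — provided the cost of transporting any point of A to the complement of A_R is at least R. (Simplified core inequality underlying Theorem 1.) -/

import Mathlib

/-!
Couple `P` and `P'` by some `Q`. A pair `(x, y)` with `y ∈ A` either has `x ∈ A_R`, which has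
`Q`-mass at most `P(A_R) ≤ ε`, or has `x ∉ A_R` and then costs at least `R`, so by Markov's
inequality such pairs have `Q`-mass at most `E_Q[cost] / R`. Taking the infimum over couplings
gives `P'(A) ≤ ε + d_W(P, P') / R`.
-/

open MeasureTheory
open scoped ENNReal

section OptimalTransport

variable {α β : Type*} [MeasurableSpace α] [MeasurableSpace β]

noncomputable def optimalTransportCost (c : α × β → ℝ≥0∞) (P : Measure α) (P' : Measure β) :
    ℝ≥0∞ :=
  sInf {w | ∃ Q : Measure (α × β), IsProbabilityMeasure Q ∧
    Q.map Prod.fst = P ∧ Q.map Prod.snd = P' ∧ w = ∫⁻ p, c p ∂Q}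

lemma const_mul_measure_le_lintegral {μ : Measure α} {s : Set α} {f : α → ℝ≥0∞} {r : ℝ≥0∞}
    (hs : MeasurableSet s) (hf : ∀ x ∈ s, r ≤ f x) : r * μ s ≤ ∫⁻ x, f x ∂μ :=
  calc r * μ s = ∫⁻ _ in s, r ∂μ := by rw [setLIntegral_const, mul_comm]
    _ ≤ ∫⁻ x in s, f x ∂μ := setLIntegral_mono' hs hf
    _ ≤ ∫⁻ x, f x ∂μ := setLIntegral_le_lintegral s f

lemma const_mul_map_snd_le_of_cost_ge (Q : Measure (α × β)) {s : Set α} {t : Set β}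
    (hs : MeasurableSet s) (ht : MeasurableSet t) {c : α × β → ℝ≥0∞} {r : ℝ≥0∞}
    (hc : ∀ x y, y ∈ t → x ∉ s → r ≤ c (x, y)) :
    r * Q.map Prod.snd t ≤ r * Q.map Prod.fst s + ∫⁻ p, c p ∂Q := by
  rw [Measure.map_apply measurable_snd ht, Measure.map_apply measurable_fst hs]
  have hcover : Prod.snd ⁻¹' t ⊆ Prod.fst ⁻¹' s ∪ sᶜ ×ˢ t := fun p hp ↦ by
    by_cases hps : p.1 ∈ s
    exacts [Or.inl hps, Or.inr ⟨hps, hp⟩]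
  have hmarkov : r * Q (sᶜ ×ˢ t) ≤ ∫⁻ p, c p ∂Q :=
    const_mul_measure_le_lintegral (hs.compl.prod ht) fun p hp ↦ hc p.1 p.2 hp.2 hp.1
  calc r * Q (Prod.snd ⁻¹' t) ≤ r * (Q (Prod.fst ⁻¹' s) + Q (sᶜ ×ˢ t)) := by
        gcongr; exact (measure_mono hcover).trans (measure_union_le _ _)
    _ ≤ r * Q (Prod.fst ⁻¹' s) + ∫⁻ p, c p ∂Q := by rw [mul_add]; gcongr

lemma const_mul_measure_le_add_optimalTransportCost {P : Measure α} {P' : Measure β}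
    {s : Set α} {t : Set β} (hs : MeasurableSet s) (ht : MeasurableSet t)
    {c : α × β → ℝ≥0∞} {r : ℝ≥0∞} (hc : ∀ x y, y ∈ t → x ∉ s → r ≤ c (x, y)) :
    r * P' t ≤ r * P s + optimalTransportCost c P P' := by
  rw [← tsub_le_iff_left]
  refine le_sInf ?_
  rintro _ ⟨Q, -, rfl, rfl, rfl⟩
  exact tsub_le_iff_left.2 (const_mul_map_snd_le_of_cost_ge Q hs ht hc)

end OptimalTransport

theorem stmt13_general {X : Type*} [NormedAddCommGroup X] [MeasurableSpace X]
    (P P' : Measure X) [IsProbabilityMeasure P] [IsProbabilityMeasure P']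
    (A : Set X) (hA : MeasurableSet A)
    (μ R ε : ℝ) (hμ : 0 ≤ μ) (hR : 0 < R) (hε0 : 0 ≤ ε)
    (AR : Set X)
    (hPAR : (P AR).toReal ≤ ε)
    (hcost : ∀ x y : X, y ∈ A → x ∉ AR → R ≤ ‖x - y‖ ^ 2)
    (hW : sInf {c : ℝ≥0∞ | ∃ Q : Measure (X × X),
        IsProbabilityMeasure Q ∧
        Q.map Prod.fst = P ∧ Q.map Prod.snd = P' ∧
        c = ∫⁻ p, ENNReal.ofReal (‖p.1 - p.2‖ ^ 2) ∂Q}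
      ≤ ENNReal.ofReal μ) :
    (P' A).toReal ≤ ε + μ / R := by
  -- `AR` need not be measurable, so the Markov step runs on a measurable hull of it.
  have hcost' : ∀ x y, y ∈ A → x ∉ toMeasurable P AR →
      ENNReal.ofReal R ≤ ENNReal.ofReal (‖x - y‖ ^ 2) := fun x y hy hx ↦
    ENNReal.ofReal_le_ofReal (hcost x y hy fun h ↦ hx (subset_toMeasurable P AR h))
  have hPB : P (toMeasurable P AR) ≤ ENNReal.ofReal ε := by
    rw [measure_toMeasurable]
    exact (ENNReal.le_ofReal_iff_toReal_le (measure_ne_top P AR) hε0).2 hPAR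
  have hbound :
      ENNReal.ofReal R * P' A ≤ ENNReal.ofReal R * ENNReal.ofReal ε + ENNReal.ofReal μ :=
    (const_mul_measure_le_add_optimalTransportCost (measurableSet_toMeasurable P AR) hA
      hcost').trans (by gcongr; exact hW)
  have hreal : R * (P' A).toReal ≤ R * ε + μ := by
    have := ENNReal.toReal_mono (by finiteness) hbound
    rwa [ENNReal.toReal_add (by finiteness) (by finiteness), ENNReal.toReal_mul,
      ENNReal.toReal_mul, ENNReal.toReal_ofReal hR.le, ENNReal.toReal_ofReal hε0,
      ENNReal.toReal_ofReal hμ] at this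
  rw [← sub_le_iff_le_add', le_div_iff₀ hR]
  linarith

/-- If `ℙ(A_R) ≤ ε̄` where `A_R = {x | ∃ a ∈ A, ‖x-a‖² < R}`, and
`ℙ'` has Wasserstein-type distance (squared-norm transport cost, infimum over
couplings) at most `μ` from `ℙ`, then `ℙ'(A) ≤ ε̄ + μ/R`, provided transporting
any point of `A` to the complement of `A_R` costs at least `R`. -/
theorem stmt13 {X : Type*} [NormedAddCommGroup X] [MeasurableSpace X]
    (P P' : Measure X) [IsProbabilityMeasure P] [IsProbabilityMeasure P']
    (A : Set X) (hA : MeasurableSet A)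
    (μ R ε : ℝ) (hμ : 0 ≤ μ) (hR : 0 < R) (hε0 : 0 ≤ ε) (hε1 : ε ≤ 1)
    (hsum : ε + μ / R ≤ 1)
    (AR : Set X) (hAR : AR = {x : X | ∃ a ∈ A, ‖x - a‖ ^ 2 < R})
    (hPAR : (P AR).toReal ≤ ε)
    (hcost : ∀ x y : X, y ∈ A → x ∉ AR → R ≤ ‖x - y‖ ^ 2)
    (hW : sInf {c : ℝ≥0∞ | ∃ Q : Measure (X × X),
        IsProbabilityMeasure Q ∧
        Q.map Prod.fst = P ∧ Q.map Prod.snd = P' ∧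
        c = ∫⁻ p, ENNReal.ofReal (‖p.1 - p.2‖ ^ 2) ∂Q}
      ≤ ENNReal.ofReal μ) :
    (P' A).toReal ≤ ε + μ / R :=
  stmt13_general P P' A hA μ R ε hμ hR hε0 AR hPAR hcost hW
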